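/- arXiv:1306.1033 — 5 statements merged into one kernel-verified Lean document; each statement's English description precedes it below -/
import Mathlib

section
/- Fix an integer p ≥ 2. For a partition λ and an integer l ≥ 0, define the l-th ramp as the set of nodes (r,c) ∈ ℕ² with c−1+(p−1)(r−1) = l. Let rmp_l(λ) be the number of nodes of λ in ramp l, rmp⁺_l(λ) the number of addable nodes of λ in ramp l, and rmp⁻_l(λ) the number of removable nodes of λ in ramp l (all zero for l < 0). Then for all l: rmp⁺_l(λ) − rmp⁻_{l−p}(λ) = δ_{l,0} − rmp_l(λ) + rmp_{l−1}(λ) + rmp_{l−p+1}(λ) − rmp_{l−p}(λ). -/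
/-- `f` represents a partition: weakly decreasing with finitely many nonzero parts.
`f r` is the `(r+1)`-th part (0-indexed). -/
def IsPartition (f : ℕ → ℕ) : Prop :=
  (∀ m n : ℕ, m ≤ n → f n ≤ f m) ∧ ∃ N, ∀ n, N ≤ n → f n = 0

/-- `(r, c)` (0-indexed) is a node of the Young diagram of `f`. -/
def Cell (f : ℕ → ℕ) (r c : ℕ) : Prop := c < f r

/-- The ramp containing the 0-indexed node `(r, c)`; this equals `c-1+(p-1)(r-1)` in
the paper's 1-indexed convention. -/
def rampOf (p : ℕ) (r c : ℕ) : ℤ := (c : ℤ) + ((p : ℤ) - 1) * (r : ℤ)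

/-- `(r, c)` is a removable node of `f`. -/
def Removable (f : ℕ → ℕ) (r c : ℕ) : Prop := c + 1 = f r ∧ f (r + 1) < f r

/-- `(r, c)` is an addable node of `f`. -/
def Addable (f : ℕ → ℕ) (r c : ℕ) : Prop := c = f r ∧ (r = 0 ∨ f r < f (r - 1))

/-- `rmp_l(λ)`: the number of nodes of `λ` in ramp `l`. -/
noncomputable def rmp (p : ℕ) (f : ℕ → ℕ) (l : ℤ) : ℕ :=
  Set.ncard {q : ℕ × ℕ | Cell f q.1 q.2 ∧ rampOf p q.1 q.2 = l}

/-- `rmp⁺_l(λ)`: the number of addable nodes of `λ` in ramp `l`. -/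
noncomputable def rmpAdd (p : ℕ) (f : ℕ → ℕ) (l : ℤ) : ℕ :=
  Set.ncard {q : ℕ × ℕ | Addable f q.1 q.2 ∧ rampOf p q.1 q.2 = l}

/-- `rmp⁻_l(λ)`: the number of removable nodes of `λ` in ramp `l`. -/
noncomputable def rmpRem (p : ℕ) (f : ℕ → ℕ) (l : ℤ) : ℕ :=
  Set.ncard {q : ℕ × ℕ | Removable f q.1 q.2 ∧ rampOf p q.1 q.2 = l}

/-!
Ramp `l` meets row `r` in at most one node, so every count in the identity is a sum over rows
of `0/1` indicators. For a row of length `n = λ_r`, the difference of the cell indicators on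
ramps `l` and `l - 1` only sees the ends of the row: `[(r, 0) ∈ ramp l] - [(r, n) ∈ ramp l]`;
the pair `l - p + 1`, `l - p` gives the same with the row index shifted to `r + 1`. The addable
node `(r, n)` and the removable node `(r, n - 1)`, which lies on ramp `l - p` exactly when
`(r + 1, n)` lies on ramp `l`, cancel these end terms except where row `r` is as long as the
row above it. What is left telescopes over `r`, and only `[(0, 0) ∈ ramp l] = δ_{l,0}` survives.
-/

open Finset

lemma rampOf_eq_add (p r c : ℕ) : rampOf p r c = c + rampOf p r 0 := by
  simp [rampOf]

lemma rampOf_succ_row (p r c : ℕ) : rampOf p (r + 1) c = rampOf p r c + (p - 1) := by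
  simp only [rampOf]; push_cast; ring

section Ramps

variable {p : ℕ}

lemma row_le_rampOf (hp : 2 ≤ p) (r c : ℕ) : (r : ℤ) ≤ rampOf p r c := by
  have hp1 : (1 : ℤ) ≤ p - 1 := by omega
  unfold rampOf
  nlinarith

open scoped Classical in
noncomputable def rowRampInd (p r : ℕ) (Q : ℕ → Prop) (l : ℤ) : ℤ :=
  if ∃ c, Q c ∧ rampOf p r c = l then 1 else 0

lemma rowRampInd_of_iff {r : ℕ} {Q : ℕ → Prop} {l : ℤ} {P : Prop} [Decidable P]
    (h : (∃ c, Q c ∧ rampOf p r c = l) ↔ P) : rowRampInd p r Q l = if P then 1 else 0 := by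
  simp only [rowRampInd, h]

lemma ncard_ramp_eq_sum_rowRampInd (hp : 2 ≤ p) {l : ℤ} {N : ℕ} (hl : l < N)
    (P : ℕ → ℕ → Prop) :
    ({q : ℕ × ℕ | P q.1 q.2 ∧ rampOf p q.1 q.2 = l}.ncard : ℤ)
      = ∑ r ∈ range N, rowRampInd p r (P r) l := by
  classical
  set S := {q : ℕ × ℕ | P q.1 q.2 ∧ rampOf p q.1 q.2 = l}
  have hinj : S.InjOn Prod.fst := by
    rintro ⟨r, c⟩ ⟨-, hc⟩ ⟨r', c'⟩ ⟨-, hc'⟩ (rfl : r = r')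
    rw [← hc', rampOf_eq_add p r c, rampOf_eq_add p r c'] at hc
    simp_all
  have himage : Prod.fst '' S = ↑((range N).filter fun r => ∃ c, P r c ∧ rampOf p r c = l) := by
    ext r
    simp only [Set.mem_image, Prod.exists, exists_and_right, exists_eq_right, coe_filter,
      mem_range, Set.mem_ofPred_eq, S]
    refine ⟨fun ⟨c, hc⟩ => ⟨?_, c, hc⟩, fun ⟨_, hc⟩ => hc⟩
    have := row_le_rampOf hp r c
    omega
  rw [← hinj.ncard_image, himage, Set.ncard_coe_finset, card_filter]
  push_cast
  rfl

lemma rowRampInd_lt (r n : ℕ) (l : ℤ) :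
    rowRampInd p r (· < n) l = if rampOf p r 0 ≤ l ∧ l < rampOf p r n then 1 else 0 := by
  refine rowRampInd_of_iff ⟨fun ⟨c, hc, hl⟩ => ?_, fun ⟨h0, hn⟩ => ?_⟩
  · rw [← hl, rampOf_eq_add p r c, rampOf_eq_add p r n]
    omega
  · rw [rampOf_eq_add p r n] at hn
    refine ⟨(l - rampOf p r 0).toNat, by omega, ?_⟩
    rw [rampOf_eq_add p r]
    omega

lemma rowRampInd_lt_sub_pred (r n : ℕ) (l : ℤ) :
    rowRampInd p r (· < n) l - rowRampInd p r (· < n) (l - 1)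
      = (if rampOf p r 0 = l then 1 else 0) - (if rampOf p r n = l then 1 else 0) := by
  rw [rowRampInd_lt, rowRampInd_lt, rampOf_eq_add p r n]
  split_ifs <;> omega

lemma rowRampInd_sub_succ_row (r : ℕ) (Q : ℕ → Prop) (l : ℤ) :
    rowRampInd p r Q (l - (p - 1)) = rowRampInd p (r + 1) Q l := by
  classical
  refine rowRampInd_of_iff (exists_congr fun c => and_congr_right' ?_)
  rw [rampOf_succ_row, eq_sub_iff_add_eq]

end Ramps

section RowIdentity

variable {p : ℕ} {f : ℕ → ℕ}

def plateauInd (p : ℕ) (f : ℕ → ℕ) (l : ℤ) (r : ℕ) : ℤ :=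
  if r ≠ 0 ∧ f r = f (r - 1) ∧ rampOf p r (f r) = l then 1 else 0

lemma rowRampInd_addable (r : ℕ) (l : ℤ) (h : f r ≤ f (r - 1)) :
    rowRampInd p r (Addable f r) l
      = (if rampOf p r (f r) = l then 1 else 0) - plateauInd p f l r := by
  rw [rowRampInd_of_iff (P := rampOf p r (f r) = l ∧ (r = 0 ∨ f r < f (r - 1)))
    (by simp [Addable, and_comm]), plateauInd]
  split_ifs <;> omega

lemma rowRampInd_removable (r : ℕ) (l : ℤ) (h : f (r + 1) ≤ f r) :
    rowRampInd p r (Removable f r) (l - p)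
      = (if rampOf p (r + 1) (f r) = l then 1 else 0) - plateauInd p f l (r + 1) := by
  rw [rowRampInd_of_iff (P := rampOf p (r + 1) (f r) = l ∧ f (r + 1) < f r), plateauInd]
  · rcases h.eq_or_lt with heq | hlt
    · simp [heq]
    · simp [hlt, hlt.ne]
  · constructor
    · rintro ⟨c, ⟨hc, hlt⟩, hl⟩
      refine ⟨?_, hlt⟩
      simp only [rampOf, ← hc] at hl ⊢
      push_cast
      linarith
    · rintro ⟨hl, hlt⟩
      refine ⟨f r - 1, ⟨by omega, hlt⟩, ?_⟩
      simp only [rampOf] at hl ⊢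
      push_cast [show 1 ≤ f r by omega] at hl ⊢
      linarith

lemma row_identity (r : ℕ) (l : ℤ) (hr : f (r + 1) ≤ f r) (hr' : f r ≤ f (r - 1)) :
    rowRampInd p r (Addable f r) l - rowRampInd p r (Removable f r) (l - p)
        + rowRampInd p r (Cell f r) l - rowRampInd p r (Cell f r) (l - 1)
        - rowRampInd p r (Cell f r) (l - p + 1) + rowRampInd p r (Cell f r) (l - p)
      = (plateauInd p f l (r + 1) - plateauInd p f l r)
        - ((if rampOf p (r + 1) 0 = l then 1 else 0) - (if rampOf p r 0 = l then 1 else 0)) := by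
  have hcell := rowRampInd_lt_sub_pred (p := p) r (f r) l
  have hcell' := rowRampInd_lt_sub_pred (p := p) (r + 1) (f r) l
  rw [← rowRampInd_sub_succ_row, ← rowRampInd_sub_succ_row] at hcell'
  rw [rowRampInd_addable r l hr', rowRampInd_removable r l hr,
    show l - p + 1 = l - (p - 1) by ring, show l - p = l - 1 - (p - 1) by ring]
  unfold Cell
  linarith

end RowIdentity

lemma rmp_eq_sum {p N : ℕ} (hp : 2 ≤ p) (f : ℕ → ℕ) {l : ℤ} (hl : l < N) :
    (rmp p f l : ℤ) = ∑ r ∈ range N, rowRampInd p r (Cell f r) l :=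
  ncard_ramp_eq_sum_rowRampInd hp hl _

lemma rmpAdd_eq_sum {p N : ℕ} (hp : 2 ≤ p) (f : ℕ → ℕ) {l : ℤ} (hl : l < N) :
    (rmpAdd p f l : ℤ) = ∑ r ∈ range N, rowRampInd p r (Addable f r) l :=
  ncard_ramp_eq_sum_rowRampInd hp hl _

lemma rmpRem_eq_sum {p N : ℕ} (hp : 2 ≤ p) (f : ℕ → ℕ) {l : ℤ} (hl : l < N) :
    (rmpRem p f l : ℤ) = ∑ r ∈ range N, rowRampInd p r (Removable f r) l :=
  ncard_ramp_eq_sum_rowRampInd hp hl _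

lemma sum_range_row_identity {p N : ℕ} (hp : 2 ≤ p) (f : ℕ → ℕ) {l : ℤ} (hl : l < N) :
    ∑ r ∈ range N, ((plateauInd p f l (r + 1) - plateauInd p f l r)
      - ((if rampOf p (r + 1) 0 = l then 1 else 0) - (if rampOf p r 0 = l then 1 else 0)))
      = if l = 0 then 1 else 0 := by
  have hfar : ∀ c, rampOf p N c ≠ l := fun c h => by
    have := row_le_rampOf hp N c
    omega
  have h00 : rampOf p 0 0 = 0 := by simp [rampOf]
  rw [sum_sub_distrib, sum_range_sub, sum_range_sub (fun r => if rampOf p r 0 = l then 1 else 0)]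
  simp [plateauInd, hfar, h00, eq_comm]

/-- For every `l`:
`rmp⁺_l(λ) − rmp⁻_{l−p}(λ) = δ_{l,0} − rmp_l(λ) + rmp_{l−1}(λ) + rmp_{l−p+1}(λ) − rmp_{l−p}(λ)`. -/
theorem stmt3 (p : ℕ) (hp : 3 ≤ p) (f : ℕ → ℕ) (hf : IsPartition f) (l : ℤ) :
    (rmpAdd p f l : ℤ) - rmpRem p f (l - p) =
      (if l = 0 then 1 else 0) - rmp p f l + rmp p f (l - 1)
        + rmp p f (l - p + 1) - rmp p f (l - p) := by
  have hp2 : 2 ≤ p := by omega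
  set N := l.toNat + 1
  have hN : ∀ l' ≤ l, l' < N := fun l' hl' => by omega
  have hrows := sum_range_row_identity hp2 f (hN l le_rfl)
  rw [← sum_congr rfl fun r _ => row_identity r l (hf.1 r (r + 1) r.le_succ)
    (hf.1 (r - 1) r (r.sub_le 1))] at hrows
  simp only [sum_add_distrib, sum_sub_distrib] at hrows
  rw [rmpAdd_eq_sum hp2 f (hN l le_rfl), rmpRem_eq_sum hp2 f (hN (l - p) (by omega)),
    rmp_eq_sum hp2 f (hN l le_rfl), rmp_eq_sum hp2 f (hN (l - 1) (by omega)),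
    rmp_eq_sum hp2 f (hN (l - p + 1) (by omega)), rmp_eq_sum hp2 f (hN (l - p) (by omega))]
  linarith
end

section
/- If λ and μ are partitions with λ^rest = μ^rest (equal p-restrictisations, i.e. rmp_l(λ) = rmp_l(μ) for all l), then rmp⁺_l(λ) − rmp⁻_{l−p}(λ) = rmp⁺_l(μ) − rmp⁻_{l−p}(μ) for every l. -/
theorem ncard_setOf_mem_and_snd_eq {α β : Type*} (h : α → β) (s : Set α) :
    {q : α × β | q.1 ∈ s ∧ q.2 = h q.1}.ncard = s.ncard := by
  rw [← Set.ncard_image_of_injective s (f := fun a => (a, h a))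
    fun a b hab => congrArg Prod.fst hab]
  congr 1
  ext ⟨a, b⟩
  simp only [Set.mem_ofPred_eq, Set.mem_image, Prod.mk.injEq]
  constructor
  · rintro ⟨ha, rfl⟩; exact ⟨a, ha, rfl, rfl⟩
  · rintro ⟨a, ha, rfl, rfl⟩; exact ⟨ha, rfl⟩

lemma rampOf_succ (p r c : ℕ) : rampOf p (r + 1) c = rampOf p r c + ((p : ℤ) - 1) := by
  simp only [rampOf]; push_cast; ring

lemma finite_setOf_rampOf_le {p : ℕ} (hp : 2 ≤ p) (c : ℕ → ℕ) (l : ℤ) :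
    {r | rampOf p r (c r) ≤ l}.Finite := by
  refine (Set.finite_Iic l.toNat).subset fun r hr => ?_
  have hp' : (2 : ℤ) ≤ p := by exact_mod_cast hp
  have : (r : ℤ) ≤ l := by simp only [Set.mem_ofPred_eq, rampOf] at hr; nlinarith
  simp only [Set.mem_Iic]; omega

section RowCounts

variable (p : ℕ) (f : ℕ → ℕ)

lemma rmp_eq_ncard (l : ℤ) :
    rmp p f l = {r | rampOf p r 0 ≤ l ∧ l < rampOf p r (f r)}.ncard := by
  rw [rmp, ← ncard_setOf_mem_and_snd_eq fun r => (l - rampOf p r 0).toNat]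
  congr 1
  ext ⟨r, c⟩
  simp only [Cell, rampOf, Set.mem_ofPred_eq, Nat.cast_zero, zero_add]
  generalize ((p : ℤ) - 1) * r = t
  omega

lemma rmpAdd_eq_ncard (l : ℤ) :
    rmpAdd p f l = {r | rampOf p r (f r) = l ∧ (r = 0 ∨ f r < f (r - 1))}.ncard := by
  rw [rmpAdd, ← ncard_setOf_mem_and_snd_eq f]
  congr 1
  ext ⟨r, c⟩
  simp only [Addable, Set.mem_ofPred_eq]
  constructor
  · rintro ⟨⟨rfl, h⟩, hl⟩; exact ⟨⟨hl, h⟩, rfl⟩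
  · rintro ⟨⟨hl, h⟩, rfl⟩; exact ⟨⟨rfl, h⟩, hl⟩

lemma rmpRem_eq_ncard (m : ℤ) :
    rmpRem p f m = {r | rampOf p r (f r) = m + 1 ∧ f (r + 1) < f r}.ncard := by
  rw [rmpRem, ← ncard_setOf_mem_and_snd_eq fun r => f r - 1]
  congr 1
  ext ⟨r, c⟩
  simp only [Removable, rampOf, Set.mem_ofPred_eq]
  generalize ((p : ℤ) - 1) * r = t
  omega

end RowCounts

section RowEnds

variable {p : ℕ} (f : ℕ → ℕ)

lemma ncard_rowEnd_le_add_rmp (hp : 2 ≤ p) (l : ℤ) :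
    {r | rampOf p r (f r) ≤ l}.ncard + rmp p f l = {r | rampOf p r 0 ≤ l}.ncard := by
  rw [rmp_eq_ncard, ← Set.ncard_inter_add_ncard_sdiff_eq_ncard {r | rampOf p r 0 ≤ l}
    {r | rampOf p r (f r) ≤ l} (finite_setOf_rampOf_le hp _ l)]
  congr 2 <;> ext r <;>
    simp only [rampOf, Set.mem_ofPred_eq, Set.mem_inter_iff, Set.mem_sdiff] <;> omega

lemma ncard_rowEnd_le_eq_add (hp : 2 ≤ p) (l : ℤ) :
    {r | rampOf p r (f r) ≤ l}.ncard =
      {r | rampOf p r (f r) ≤ l - 1}.ncard + {r | rampOf p r (f r) = l}.ncard := by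
  have hsub : {r | rampOf p r (f r) ≤ l - 1} ⊆ {r | rampOf p r (f r) ≤ l} :=
    fun r (hr : _ ≤ l - 1) => show _ ≤ l by omega
  rw [add_comm, ← Set.ncard_sdiff_add_ncard_of_subset hsub (finite_setOf_rampOf_le hp f l)]
  congr 2
  ext r
  simp only [Set.mem_ofPred_eq, Set.mem_sdiff]
  omega

lemma ncard_rowEnd_eq_of_rmp_eq (hp : 2 ≤ p) {g : ℕ → ℕ} (hrest : ∀ l, rmp p f l = rmp p g l)
    (l : ℤ) :
    {r | rampOf p r (f r) = l}.ncard = {r | rampOf p r (g r) = l}.ncard := by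
  have := ncard_rowEnd_le_add_rmp f hp l
  have := ncard_rowEnd_le_add_rmp f hp (l - 1)
  have := ncard_rowEnd_le_add_rmp g hp l
  have := ncard_rowEnd_le_add_rmp g hp (l - 1)
  have := ncard_rowEnd_le_eq_add f hp l
  have := ncard_rowEnd_le_eq_add g hp l
  have := hrest l
  have := hrest (l - 1)
  omega

variable {f}

lemma rmpAdd_add_ncard_flat (hp : 2 ≤ p) (hf : Antitone f) (l : ℤ) :
    rmpAdd p f l + {r | f (r + 1) = f r ∧ rampOf p r (f r) = l - (p - 1)}.ncard =
      {r | rampOf p r (f r) = l}.ncard := by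
  have hshift : (· + 1) '' {r | f (r + 1) = f r ∧ rampOf p r (f r) = l - (p - 1)} =
      {r | rampOf p r (f r) = l} \ {r | r = 0 ∨ f r < f (r - 1)} := by
    ext r
    cases r with
    | zero => simp
    | succ s =>
      have := hf (Nat.le_add_right s 1)
      simp only [(add_left_injective 1).mem_set_image, Set.mem_ofPred_eq, Set.mem_sdiff,
        Nat.add_sub_cancel, rampOf_succ]
      simp only [rampOf]
      generalize ((p : ℤ) - 1) * s = t
      omega
  rw [rmpAdd_eq_ncard, Set.ofPred_and, ← Set.ncard_inter_add_ncard_sdiff_eq_ncard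
    {r | rampOf p r (f r) = l} {r | r = 0 ∨ f r < f (r - 1)}
    ((finite_setOf_rampOf_le hp f l).subset fun r => le_of_eq), ← hshift,
    Set.ncard_image_of_injective _ (add_left_injective 1)]

lemma rmpRem_add_ncard_flat (hp : 2 ≤ p) (hf : Antitone f) (l : ℤ) :
    rmpRem p f (l - p) + {r | f (r + 1) = f r ∧ rampOf p r (f r) = l - (p - 1)}.ncard =
      {r | rampOf p r (f r) = l - (p - 1)}.ncard := by
  rw [rmpRem_eq_ncard, ← Set.ncard_inter_add_ncard_sdiff_eq_ncard
    {r | rampOf p r (f r) = l - (p - 1)} {r | f (r + 1) < f r}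
    ((finite_setOf_rampOf_le hp f _).subset fun r => le_of_eq)]
  congr 2 <;> ext r <;> have := hf (Nat.le_add_right r 1) <;>
    simp only [Set.mem_ofPred_eq, Set.mem_inter_iff, Set.mem_sdiff] <;> omega

lemma rmpAdd_sub_rmpRem (hp : 2 ≤ p) (hf : Antitone f) (l : ℤ) :
    (rmpAdd p f l : ℤ) - rmpRem p f (l - p) =
      {r | rampOf p r (f r) = l}.ncard - {r | rampOf p r (f r) = l - (p - 1)}.ncard := by
  have := rmpAdd_add_ncard_flat hp hf l
  have := rmpRem_add_ncard_flat hp hf l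
  omega

end RowEnds

/-- If `λ` and `μ` are partitions with the same `p`-restrictisation (equivalently, the
same number of nodes in each ramp), then `rmp⁺_l(λ) − rmp⁻_{l−p}(λ) = rmp⁺_l(μ) − rmp⁻_{l−p}(μ)`
for every `l`. -/
theorem stmt4 (p : ℕ) (hp : 3 ≤ p) (f g : ℕ → ℕ)
    (hf : IsPartition f) (hg : IsPartition g)
    (hrest : ∀ l : ℤ, rmp p f l = rmp p g l) :
    ∀ l : ℤ, (rmpAdd p f l : ℤ) - rmpRem p f (l - p) =
      (rmpAdd p g l : ℤ) - rmpRem p g (l - p) := by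
  intro l
  have hp2 : 2 ≤ p := by omega
  rw [rmpAdd_sub_rmpRem hp2 hf.1, rmpAdd_sub_rmpRem hp2 hg.1,
    ncard_rowEnd_eq_of_rmp_eq f hp2 hrest l,
    ncard_rowEnd_eq_of_rmp_eq f hp2 hrest (l - (p - 1))]
end

section
/- Let p ≥ 2 and let λ be a partition such that, for some i ∈ ℤ/pℤ, λ has at least one addable i-node and at least one removable i-node. Then at least one of the components λ^{(i−1)} and λ^{(i)} of the p-quotient of λ is non-empty. -/
/-- The `p`-residue of the node `(r, c)`. -/
def res (p : ℕ) (r c : ℕ) : ZMod p := (c : ZMod p) - (r : ZMod p)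

/-- The set of occupied positions (beads) in the abacus display of the partition `f`:
there is a bead at position `f_j − j` for each `j ≥ 1`. -/
def Occ (f : ℕ → ℕ) : Set ℤ := {x : ℤ | ∃ j : ℕ, x = (f j : ℤ) - ((j : ℤ) + 1)}

/-- `q_i(λ)`: the position of the first vacant position on runner `i` in the abacus
display of the `p`-core of `λ` (computed via the `charge` of runner `i`, which is
invariant under sliding beads up the runner). -/
noncomputable def qpos (p : ℕ) (f : ℕ → ℕ) (i : ZMod p) : ℤ :=
  (i.val : ℤ) + p *
    ((Set.ncard {x : ℤ | x ∈ Occ f ∧ (x : ZMod p) = i ∧ (i.val : ℤ) ≤ x} : ℤ) -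
     (Set.ncard {x : ℤ | x ∉ Occ f ∧ (x : ZMod p) = i ∧ x < (i.val : ℤ)} : ℤ))

/-- The first vacant position on runner `i` of the abacus display of `f`. -/
noncomputable def firstSpace (p : ℕ) (f : ℕ → ℕ) (i : ZMod p) : ℤ :=
  sInf {x : ℤ | (x : ZMod p) = i ∧ x ∉ Occ f}

/-- The last occupied position on runner `i` of the abacus display of `f`. -/
noncomputable def lastBead (p : ℕ) (f : ℕ → ℕ) (i : ZMod p) : ℤ :=
  sSup {x : ℤ | (x : ZMod p) = i ∧ x ∈ Occ f}

/-- `f` is `p`-quotient-separated: there do not exist runners `i ≠ j` such that the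
first space on runner `i` is earlier than the last bead on runner `j` and the first
space on runner `j` is earlier than the last bead on runner `i`. -/
def QSep (p : ℕ) (f : ℕ → ℕ) : Prop :=
  ¬ ∃ i j : ZMod p, i ≠ j ∧ firstSpace p f i < lastBead p f j ∧
      firstSpace p f j < lastBead p f i

/-- The position of the `(k+1)`-th lowest (i.e. latest) bead on runner `i`. -/
noncomputable def nthBead (p : ℕ) (f : ℕ → ℕ) (i : ZMod p) : ℕ → ℤ
  | 0 => sSup {x : ℤ | x ∈ Occ f ∧ (x : ZMod p) = i}
  | k + 1 => sSup {x : ℤ | x ∈ Occ f ∧ (x : ZMod p) = i ∧ x < nthBead p f i k}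

/-- The `p`-quotient component `λ^{(i)}`, as a parts function: its `(k+1)`-th part is
the number of vacant positions on runner `i` earlier than the `(k+1)`-th lowest bead
on runner `i`. -/
noncomputable def quotFn (p : ℕ) (f : ℕ → ℕ) (i : ZMod p) : ℕ → ℕ :=
  fun k => Set.ncard {x : ℤ | x ∉ Occ f ∧ (x : ZMod p) = i ∧ x < nthBead p f i k}

/-!
A removable `i`-node gives a bead at some position `a ≡ i` with `a - 1` vacant, and an addable
`i`-node gives a vacancy at some `b ≡ i` with `b - 1` occupied. If `b < a`, runner `i` carries a
vacancy below a bead; if `a < b`, runner `i - 1` carries the vacancy `a - 1` below the bead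
`b - 1`. A vacancy below a bead on a runner makes the first part of that quotient component
positive.
-/

def beadPos (f : ℕ → ℕ) (j : ℕ) : ℤ := (f j : ℤ) - ((j : ℤ) + 1)

section Abacus

variable {f : ℕ → ℕ}

lemma beadPos_strictAnti (hf : IsPartition f) : StrictAnti (beadPos f) := by
  refine strictAnti_nat_of_succ_lt fun n => ?_
  have : f (n + 1) ≤ f n := hf.1 n (n + 1) n.le_succ
  simp only [beadPos]
  push_cast
  omega

lemma le_beadPos_zero_of_mem_occ (hf : IsPartition f) {x : ℤ} (hx : x ∈ Occ f) :
    x ≤ beadPos f 0 := by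
  obtain ⟨j, rfl⟩ := hx
  exact (beadPos_strictAnti hf).antitone j.zero_le

lemma notMem_occ_of_beadPos_lt_of_lt (hf : IsPartition f) {r : ℕ} {x : ℤ}
    (h₁ : beadPos f (r + 1) < x) (h₂ : x < beadPos f r) : x ∉ Occ f := by
  rintro ⟨j, rfl⟩
  rcases le_or_gt j r with hj | hj
  · exact h₂.not_ge ((beadPos_strictAnti hf).antitone hj)
  · exact h₁.not_ge ((beadPos_strictAnti hf).antitone hj)

lemma bddBelow_compl_occ (hf : IsPartition f) : BddBelow (Occ f)ᶜ := by
  obtain ⟨N, hN⟩ := hf.2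
  refine ⟨-(N : ℤ), fun x hx => ?_⟩
  by_contra! hlt
  -- below `-N` every part is `0`, so every position there holds a bead
  refine hx ⟨(-(x + 1)).toNat, ?_⟩
  rw [hN _ (by omega)]
  omega

lemma Removable.mem_occ {r c : ℕ} (h : Removable f r c) : (c : ℤ) - r ∈ Occ f :=
  ⟨r, by have := h.1; omega⟩

lemma Removable.sub_one_notMem_occ (hf : IsPartition f) {r c : ℕ} (h : Removable f r c) :
    (c : ℤ) - r - 1 ∉ Occ f := by
  obtain ⟨hc, hlt⟩ := h
  apply notMem_occ_of_beadPos_lt_of_lt hf (r := r) <;> simp only [beadPos] <;> push_cast <;>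
    omega

lemma Addable.sub_one_mem_occ {r c : ℕ} (h : Addable f r c) : (c : ℤ) - r - 1 ∈ Occ f :=
  ⟨r, by rw [← h.1]; ring⟩

lemma Addable.notMem_occ (hf : IsPartition f) {r c : ℕ} (h : Addable f r c) :
    (c : ℤ) - r ∉ Occ f := by
  obtain ⟨rfl, rfl | hlt⟩ := h
  · intro hx
    have := le_beadPos_zero_of_mem_occ hf hx
    simp only [beadPos] at this
    omega
  · obtain ⟨s, rfl⟩ : ∃ s, r = s + 1 := Nat.exists_eq_succ_of_ne_zero (by rintro rfl; simp at hlt)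
    apply notMem_occ_of_beadPos_lt_of_lt hf (r := s) <;> simp only [beadPos] <;> push_cast <;>
      simp only [Nat.add_sub_cancel] at hlt <;> omega

lemma quotFn_ne_zero_of_notMem_lt_mem {p : ℕ} (hf : IsPartition f) {i : ZMod p} {v o : ℤ}
    (hv : v ∉ Occ f) (hvi : (v : ZMod p) = i) (ho : o ∈ Occ f) (hoi : (o : ZMod p) = i)
    (hvo : v < o) : quotFn p f i ≠ fun _ => 0 := by
  intro hzero
  obtain ⟨m, hm⟩ := bddBelow_compl_occ hf
  have hbead : o ≤ nthBead p f i 0 :=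
    le_csSup ⟨beadPos f 0, fun x hx => le_beadPos_zero_of_mem_occ hf hx.1⟩ ⟨ho, hoi⟩
  have hfinite : {x : ℤ | x ∉ Occ f ∧ (x : ZMod p) = i ∧ x < nthBead p f i 0}.Finite :=
    (Set.finite_Icc m (nthBead p f i 0)).subset fun x hx => ⟨hm hx.1, hx.2.2.le⟩
  have hpos : 0 < quotFn p f i 0 :=
    (Set.ncard_pos hfinite).mpr ⟨v, hv, hvi, hvo.trans_le hbead⟩
  exact hpos.ne' (congrFun hzero 0)

end Abacus

lemma intCast_sub_eq_res (p r c : ℕ) : (((c : ℤ) - r : ℤ) : ZMod p) = res p r c := by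
  simp [res]

theorem stmt7_general (p : ℕ) (f : ℕ → ℕ) (hf : IsPartition f) (i : ZMod p)
    (hadd : ∃ r c, Addable f r c ∧ res p r c = i)
    (hrem : ∃ r c, Removable f r c ∧ res p r c = i) :
    quotFn p f (i - 1) ≠ (fun _ => 0) ∨ quotFn p f i ≠ (fun _ => 0) := by
  obtain ⟨ra, ca, hadd, hresa⟩ := hadd
  obtain ⟨rr, cr, hrem, hresr⟩ := hrem
  rw [← intCast_sub_eq_res] at hresa hresr
  have hne : (cr : ℤ) - rr ≠ (ca : ℤ) - ra := fun h => hadd.notMem_occ hf (h ▸ hrem.mem_occ)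
  rcases hne.lt_or_gt with hlt | hgt
  · left
    refine quotFn_ne_zero_of_notMem_lt_mem hf (hrem.sub_one_notMem_occ hf) ?_
      hadd.sub_one_mem_occ ?_ (by omega)
    · rw [Int.cast_sub, hresr, Int.cast_one]
    · rw [Int.cast_sub, hresa, Int.cast_one]
  · right
    exact quotFn_ne_zero_of_notMem_lt_mem hf (hadd.notMem_occ hf) hresa hrem.mem_occ hresr hgt

/-- If `λ` has at least one addable `i`-node and at least one removable `i`-node,
then at least one of the `p`-quotient components `λ^{(i−1)}`, `λ^{(i)}` is non-empty. -/
theorem stmt7 (p : ℕ) (hp : 2 ≤ p) (f : ℕ → ℕ) (hf : IsPartition f) (i : ZMod p)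
    (hadd : ∃ r c, Addable f r c ∧ res p r c = i)
    (hrem : ∃ r c, Removable f r c ∧ res p r c = i) :
    quotFn p f (i - 1) ≠ (fun _ => 0) ∨ quotFn p f i ≠ (fun _ => 0) :=
  stmt7_general p f hf i hadd hrem
end

section
/- Let λ be a partition, i ∈ ℤ/pℤ, and k < l integers. Suppose in the abacus display for λ, positions kp+i−1 and lp+i are occupied while positions kp+i and lp+i−1 are vacant, and the number of beads in positions kp+i+1, …, lp+i−2 is at least l−k. Then λ has a removable i-node and an addable i-node in a strictly later ramp. -/
/-!
Let the beads at `lp+i` and `kp+i-1` be the `r`-th and `s`-th beads, i.e. `f r - r - 1 = lp+i` and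
`f s - s - 1 = kp+i-1`. The vacancy at `lp+i-1` makes `(r, f r - 1)` removable and the vacancy at
`kp+i` makes `(s, f s)` addable; both have content `≡ i (mod p)`. A node of content `x` in row `r`
lies in ramp `x + p r`, so the two ramps are `lp+i+pr` and `kp+i+ps`. The beads strictly between
the two given ones are exactly beads `r+1, …, s-1`, so `l - k ≤ s - r - 1`, which makes the second
ramp later.
-/

-- Rows are 0-indexed: `f j` is the part `λ_{j+1}`, whose bead is at `λ_{j+1} - (j+1)`.
def bead (f : ℕ → ℕ) (j : ℕ) : ℤ := (f j : ℤ) - ((j : ℤ) + 1)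

lemma res_eq_intCast (p r c : ℕ) : res p r c = (((c : ℤ) - r : ℤ) : ZMod p) := by
  simp [res]

lemma rampOf_eq (p r c : ℕ) : rampOf p r c = ((c : ℤ) - r) + p * r := by
  unfold rampOf; ring

lemma intCast_mul_natCast_add (p : ℕ) (l i : ℤ) : ((l * p + i : ℤ) : ZMod p) = i := by
  simp

section Abacus

variable {f : ℕ → ℕ}

lemma bead_strictAnti (hf : Antitone f) : StrictAnti (bead f) := fun m n hmn => by
  have : f n ≤ f m := hf hmn.le
  simp only [bead]
  omega

lemma occ_inter_Ioo_bead (hf : Antitone f) (r s : ℕ) :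
    Occ f ∩ Set.Ioo (bead f s) (bead f r) = bead f '' Set.Ioo r s := by
  ext x
  constructor
  · rintro ⟨⟨j, rfl⟩, hsj, hjr⟩
    exact ⟨j, ⟨(bead_strictAnti hf).lt_iff_gt.1 hjr, (bead_strictAnti hf).lt_iff_gt.1 hsj⟩, rfl⟩
  · rintro ⟨j, ⟨hrj, hjs⟩, rfl⟩
    exact ⟨⟨j, rfl⟩, bead_strictAnti hf hjs, bead_strictAnti hf hrj⟩

lemma ncard_occ_inter_Ioo_bead (hf : Antitone f) (r s : ℕ) :
    (Occ f ∩ Set.Ioo (bead f s) (bead f r)).ncard = s - r - 1 := by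
  rw [occ_inter_Ioo_bead hf, Set.ncard_image_of_injective _ (bead_strictAnti hf).injective,
    Set.ncard_Ioo_nat]

lemma exists_removable_of_bead (hf : Antitone f) {r : ℕ} {x : ℤ} (hr : bead f r = x)
    (hx : x - 1 ∉ Occ f) : ∃ c, Removable f r c ∧ (c : ℤ) - r = x := by
  have hlt : bead f (r + 1) < x := hr ▸ bead_strictAnti hf r.lt_succ_self
  have hne : bead f (r + 1) ≠ x - 1 := fun h => hx ⟨r + 1, h.symm⟩
  simp only [bead] at hr hlt hne
  push_cast at hlt hne
  exact ⟨f r - 1, ⟨by omega, by omega⟩, by omega⟩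

lemma exists_addable_of_bead (hf : Antitone f) {s : ℕ} {x : ℤ} (hs : bead f s = x - 1)
    (hx : x ∉ Occ f) : ∃ d, Addable f s d ∧ (d : ℤ) - s = x := by
  refine ⟨f s, ⟨rfl, ?_⟩, by simp only [bead] at hs; omega⟩
  rcases s with _ | t
  · exact Or.inl rfl
  · have hlt : x - 1 < bead f t := hs ▸ bead_strictAnti hf t.lt_succ_self
    have hne : bead f t ≠ x := fun h => hx ⟨t, h.symm⟩
    simp only [bead] at hs hlt hne
    push_cast at hs
    exact Or.inr (by simp only [Nat.add_sub_cancel]; omega)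

end Abacus

/-- If in the abacus display of `λ` positions `kp+i−1` and `lp+i` are occupied while
positions `kp+i` and `lp+i−1` are vacant (`k < l`), and the number of beads in
positions `kp+i+1, …, lp+i−2` is at least `l−k`, then `λ` has a removable `i`-node
and an addable `i`-node in a strictly later ramp. -/
theorem stmt8 (p : ℕ) (hp : 2 ≤ p) (f : ℕ → ℕ) (hf : IsPartition f)
    (i k l : ℤ) (hkl : k < l)
    (h1 : k * p + i - 1 ∈ Occ f) (h2 : l * p + i ∈ Occ f)
    (h3 : k * p + i ∉ Occ f) (h4 : l * p + i - 1 ∉ Occ f)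
    (h5 : l - k ≤ (Set.ncard {x : ℤ | x ∈ Occ f ∧ k * p + i < x ∧ x < l * p + i - 1} : ℤ)) :
    ∃ r c s d, Removable f r c ∧ res p r c = (i : ZMod p) ∧
      Addable f s d ∧ res p s d = (i : ZMod p) ∧ rampOf p r c < rampOf p s d := by
  have hanti : Antitone f := fun _ _ => hf.1 _ _
  obtain ⟨r, hr⟩ : ∃ r, bead f r = l * p + i := h2.imp fun _ h => h.symm
  obtain ⟨s, hs⟩ : ∃ s, bead f s = k * p + i - 1 := h1.imp fun _ h => h.symm
  obtain ⟨c, hrem, hc⟩ := exists_removable_of_bead hanti hr h4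
  obtain ⟨d, hadd, hd⟩ := exists_addable_of_bead hanti hs h3
  have hcount : l - k ≤ ((s - r - 1 : ℕ) : ℤ) := by
    refine h5.trans ?_
    rw [← ncard_occ_inter_Ioo_bead hanti r s]
    have hsub : {x : ℤ | x ∈ Occ f ∧ k * p + i < x ∧ x < l * p + i - 1} ⊆
        Occ f ∩ Set.Ioo (bead f s) (bead f r) :=
      fun x ⟨hx, hKx, hxL⟩ => ⟨hx, by rw [hs]; omega, by rw [hr]; omega⟩
    exact_mod_cast Set.ncard_le_ncard hsub ((Set.finite_Ioo _ _).inter_of_right _)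
  refine ⟨r, c, s, d, hrem, ?_, hadd, ?_, ?_⟩
  · rw [res_eq_intCast, hc, intCast_mul_natCast_add]
  · rw [res_eq_intCast, hd, intCast_mul_natCast_add]
  · have hgap : l - k + 1 ≤ (s : ℤ) - r := by omega
    have hp0 : (0 : ℤ) < p := by omega
    rw [rampOf_eq, rampOf_eq, hc, hd]
    linarith [mul_le_mul_of_nonneg_left hgap hp0.le]
end

section
/- Suppose λ is a p-quotient-separated partition and i, j are runners with q_i(λ) < q_j(λ). Then in the abacus display for λ, the first vacant position on runner j is later than the last occupied position on runner i. -/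
/-! For `t` on runner `r`, the quantity `t + p * (#beads at or after t - #spaces before t)`
does not depend on `t` (replacing `t` by `t + p` lowers the bracket by exactly one), and at
`t = r.val` it is `q_r`. Evaluating it at the first space and just after the last bead of
runner `r` gives `firstSpace ≤ q_r ≤ lastBead + p`, with `firstSpace + p ≤ q_r` when some bead
lies after the first space, and `q_r ≤ max firstSpace lastBead`. If the theorem failed,
quotient separation would also give `lastBead_j < firstSpace_i`, and comparing the first spaces
of runners `i` and `j` these bounds force `q_j ≤ q_i`. -/

namespace Abacus

variable {p : ℕ} {f : ℕ → ℕ}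

def beadsFrom (p : ℕ) (f : ℕ → ℕ) (r : ZMod p) (t : ℤ) : Set ℤ :=
  {x : ℤ | x ∈ Occ f ∧ (x : ZMod p) = r ∧ t ≤ x}

def spacesBefore (p : ℕ) (f : ℕ → ℕ) (r : ZMod p) (t : ℤ) : Set ℤ :=
  {x : ℤ | x ∉ Occ f ∧ (x : ZMod p) = r ∧ x < t}

noncomputable def charge (p : ℕ) (f : ℕ → ℕ) (r : ZMod p) (t : ℤ) : ℤ :=
  ((beadsFrom p f r t).ncard : ℤ) - ((spacesBefore p f r t).ncard : ℤ)

theorem qpos_eq_charge (r : ZMod p) :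
    qpos p f r = (r.val : ℤ) + p * charge p f r (r.val : ℤ) := rfl

theorem lt_of_mem_occ (hf : Antitone f) {x : ℤ} (hx : x ∈ Occ f) : x < f 0 := by
  obtain ⟨j, rfl⟩ := hx
  have : f j ≤ f 0 := hf (Nat.zero_le j)
  omega

theorem mem_occ_of_lt {N : ℕ} (hN : ∀ n, N ≤ n → f n = 0) {x : ℤ} (hx : x < -N) :
    x ∈ Occ f := by
  refine ⟨(-x - 1).toNat, ?_⟩
  rw [hN _ (by omega)]
  omega

theorem beadsFrom_finite (hf : Antitone f) (r : ZMod p) (t : ℤ) :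
    (beadsFrom p f r t).Finite :=
  (Set.finite_Ico t (f 0)).subset fun _ ⟨hx, _, htx⟩ => ⟨htx, lt_of_mem_occ hf hx⟩

theorem spacesBefore_finite {N : ℕ} (hN : ∀ n, N ≤ n → f n = 0) (r : ZMod p) (t : ℤ) :
    (spacesBefore p f r t).Finite :=
  (Set.finite_Ico (-N : ℤ) t).subset fun _ ⟨hx, _, hxt⟩ =>
    ⟨not_lt.mp fun h => hx (mem_occ_of_lt hN h), hxt⟩

theorem le_iff_eq_or_add_le {t x : ℤ} (h : (x : ZMod p) = t) :
    t ≤ x ↔ x = t ∨ t + p ≤ x := by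
  have hdvd : (p : ℤ) ∣ x - t := (ZMod.intCast_eq_intCast_iff_dvd_sub t x p).mp h.symm
  constructor
  · intro htx
    by_contra! hne
    exact hne.1 (sub_eq_zero.mp (Int.eq_zero_of_dvd_of_nonneg_of_lt (by omega) (by omega) hdvd))
  · rintro (rfl | h) <;> omega

theorem lt_add_iff_eq_or_lt [NeZero p] {t x : ℤ} (h : (x : ZMod p) = t) :
    x < t + p ↔ x = t ∨ x < t := by
  have hp : 0 < p := NeZero.pos p
  constructor
  · intro hxt
    by_cases htx : t ≤ x
    · exact Or.inl (((le_iff_eq_or_add_le h).mp htx).resolve_right (by omega))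
    · exact Or.inr (by omega)
  · rintro (rfl | hxt) <;> omega

section Step

variable {r : ZMod p} {t : ℤ}

theorem beadsFrom_eq_insert (ht : (t : ZMod p) = r) (hocc : t ∈ Occ f) :
    beadsFrom p f r t = insert t (beadsFrom p f r (t + p)) := by
  ext x
  simp only [beadsFrom, Set.mem_insert_iff, Set.mem_ofPred_eq]
  constructor
  · rintro ⟨hx, hxr, htx⟩
    exact ((le_iff_eq_or_add_le (hxr.trans ht.symm)).mp htx).imp id fun h => ⟨hx, hxr, h⟩
  · rintro (rfl | ⟨hx, hxr, h⟩)
    · exact ⟨hocc, ht, le_rfl⟩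
    · exact ⟨hx, hxr, (le_iff_eq_or_add_le (hxr.trans ht.symm)).mpr (Or.inr h)⟩

theorem beadsFrom_eq_of_notMem (ht : (t : ZMod p) = r) (hocc : t ∉ Occ f) :
    beadsFrom p f r t = beadsFrom p f r (t + p) := by
  ext x
  simp only [beadsFrom, Set.mem_ofPred_eq]
  constructor
  · rintro ⟨hx, hxr, htx⟩
    refine ⟨hx, hxr, ((le_iff_eq_or_add_le (hxr.trans ht.symm)).mp htx).resolve_left ?_⟩
    rintro rfl
    exact hocc hx
  · rintro ⟨hx, hxr, h⟩
    exact ⟨hx, hxr, (le_iff_eq_or_add_le (hxr.trans ht.symm)).mpr (Or.inr h)⟩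

theorem spacesBefore_add_eq_of_mem [NeZero p] (ht : (t : ZMod p) = r) (hocc : t ∈ Occ f) :
    spacesBefore p f r (t + p) = spacesBefore p f r t := by
  ext x
  simp only [spacesBefore, Set.mem_ofPred_eq]
  constructor
  · rintro ⟨hx, hxr, hxt⟩
    refine ⟨hx, hxr, ((lt_add_iff_eq_or_lt (hxr.trans ht.symm)).mp hxt).resolve_left ?_⟩
    rintro rfl
    exact hx hocc
  · rintro ⟨hx, hxr, h⟩
    exact ⟨hx, hxr, (lt_add_iff_eq_or_lt (hxr.trans ht.symm)).mpr (Or.inr h)⟩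

theorem spacesBefore_add_eq_insert [NeZero p] (ht : (t : ZMod p) = r) (hocc : t ∉ Occ f) :
    spacesBefore p f r (t + p) = insert t (spacesBefore p f r t) := by
  ext x
  simp only [spacesBefore, Set.mem_insert_iff, Set.mem_ofPred_eq]
  constructor
  · rintro ⟨hx, hxr, hxt⟩
    exact ((lt_add_iff_eq_or_lt (hxr.trans ht.symm)).mp hxt).imp id fun h => ⟨hx, hxr, h⟩
  · rintro (rfl | ⟨hx, hxr, h⟩)
    · exact ⟨hocc, ht, (lt_add_iff_eq_or_lt rfl).mpr (Or.inl rfl)⟩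
    · exact ⟨hx, hxr, (lt_add_iff_eq_or_lt (hxr.trans ht.symm)).mpr (Or.inr h)⟩

theorem charge_add [NeZero p] (hf : IsPartition f) (ht : (t : ZMod p) = r) :
    charge p f r (t + p) = charge p f r t - 1 := by
  obtain ⟨hanti, N, hN⟩ := hf
  unfold charge
  by_cases hocc : t ∈ Occ f
  · have hnot : t ∉ beadsFrom p f r (t + p) := fun h => by
      have := h.2.2
      have := NeZero.pos p
      omega
    rw [beadsFrom_eq_insert ht hocc, spacesBefore_add_eq_of_mem ht hocc,
      Set.ncard_insert_of_notMem hnot (beadsFrom_finite hanti r _)]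
    push_cast
    ring
  · have hnot : t ∉ spacesBefore p f r t := fun h => lt_irrefl t h.2.2
    rw [beadsFrom_eq_of_notMem ht hocc, spacesBefore_add_eq_insert ht hocc,
      Set.ncard_insert_of_notMem hnot (spacesBefore_finite hN r _)]
    push_cast
    ring

end Step

theorem qpos_eq_add_charge [NeZero p] (hf : IsPartition f) {r : ZMod p} {t : ℤ}
    (ht : (t : ZMod p) = r) : qpos p f r = t + p * charge p f r t := by
  have hper : Function.Periodic
      (fun m : ℤ => ((r.val : ℤ) + p * m) + p * charge p f r ((r.val : ℤ) + p * m)) 1 := by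
    intro m
    simp only
    rw [show (r.val : ℤ) + p * (m + 1) = ((r.val : ℤ) + p * m) + p by ring,
      charge_add hf (by simp)]
    ring
  obtain ⟨m, rfl⟩ : ∃ m : ℤ, t = r.val + p * m := by
    obtain ⟨m, hm⟩ := (ZMod.intCast_eq_intCast_iff_dvd_sub (r.val : ℤ) t p).mp (by simp [ht])
    exact ⟨m, by linarith⟩
  have hm := hper.int_mul_eq m
  simp only [Int.cast_id, mul_one, mul_zero, add_zero] at hm
  rw [qpos_eq_charge, hm]

theorem isLeast_firstSpace [NeZero p] (hf : IsPartition f) (r : ZMod p) :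
    IsLeast {x : ℤ | (x : ZMod p) = r ∧ x ∉ Occ f} (firstSpace p f r) := by
  obtain ⟨hanti, N, hN⟩ := hf
  have hne : {x : ℤ | (x : ZMod p) = r ∧ x ∉ Occ f}.Nonempty := by
    refine ⟨r.val + p * f 0, by simp, fun hmem => ?_⟩
    have := lt_of_mem_occ hanti hmem
    have : (f 0 : ℤ) ≤ p * f 0 := le_mul_of_one_le_left (by positivity) (by simp [NeZero.one_le])
    omega
  have hbdd : BddBelow {x : ℤ | (x : ZMod p) = r ∧ x ∉ Occ f} :=
    ⟨-N, fun x hx => not_lt.mp fun h => hx.2 (mem_occ_of_lt hN h)⟩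
  exact ⟨Int.csInf_mem hne hbdd, fun x hx => csInf_le hbdd hx⟩

theorem isGreatest_lastBead [NeZero p] (hf : IsPartition f) (r : ZMod p) :
    IsGreatest {x : ℤ | (x : ZMod p) = r ∧ x ∈ Occ f} (lastBead p f r) := by
  obtain ⟨hanti, N, hN⟩ := hf
  have hne : {x : ℤ | (x : ZMod p) = r ∧ x ∈ Occ f}.Nonempty := by
    refine ⟨r.val + p * (-N - 1), by simp, mem_occ_of_lt hN ?_⟩
    have := ZMod.val_lt r
    have : (N : ℤ) ≤ p * N := le_mul_of_one_le_left (by positivity) (by simp [NeZero.one_le])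
    nlinarith
  have hbdd : BddAbove {x : ℤ | (x : ZMod p) = r ∧ x ∈ Occ f} :=
    ⟨f 0, fun x hx => (lt_of_mem_occ hanti hx.2).le⟩
  exact ⟨Int.csSup_mem hne hbdd, fun x hx => le_csSup hbdd hx⟩

theorem qpos_eq_firstSpace_add [NeZero p] (hf : IsPartition f) (r : ZMod p) :
    qpos p f r = firstSpace p f r + p * (beadsFrom p f r (firstSpace p f r)).ncard := by
  obtain ⟨⟨hres, -⟩, hleast⟩ := isLeast_firstSpace hf r
  have hempty : spacesBefore p f r (firstSpace p f r) = ∅ :=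
    Set.eq_empty_of_forall_notMem fun x ⟨hx, hxr, hlt⟩ => (hleast ⟨hxr, hx⟩).not_gt hlt
  rw [qpos_eq_add_charge hf hres, charge, hempty, Set.ncard_empty]
  ring

theorem qpos_eq_lastBead_add_sub [NeZero p] (hf : IsPartition f) (r : ZMod p) :
    qpos p f r = lastBead p f r + p - p * (spacesBefore p f r (lastBead p f r + p)).ncard := by
  obtain ⟨⟨hres, -⟩, hgreatest⟩ := isGreatest_lastBead hf r
  have hp : 0 < p := NeZero.pos p
  have hempty : beadsFrom p f r (lastBead p f r + p) = ∅ :=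
    Set.eq_empty_of_forall_notMem fun x ⟨hx, hxr, hle⟩ => by
      have := hgreatest ⟨hxr, hx⟩
      omega
  rw [qpos_eq_add_charge hf (t := lastBead p f r + p) (by simp [hres]), charge,
    hempty, Set.ncard_empty]
  ring

theorem firstSpace_le_qpos [NeZero p] (hf : IsPartition f) (r : ZMod p) :
    firstSpace p f r ≤ qpos p f r := by
  rw [qpos_eq_firstSpace_add hf]
  have : (0 : ℤ) ≤ p * (beadsFrom p f r (firstSpace p f r)).ncard := by positivity
  omega

theorem firstSpace_add_le_qpos [NeZero p] (hf : IsPartition f) (r : ZMod p)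
    (h : firstSpace p f r < lastBead p f r) :
    firstSpace p f r + p ≤ qpos p f r := by
  obtain ⟨⟨hres, hocc⟩, -⟩ := isGreatest_lastBead hf r
  have hpos : 0 < (beadsFrom p f r (firstSpace p f r)).ncard :=
    (Set.ncard_pos (beadsFrom_finite hf.1 r _)).mpr ⟨lastBead p f r, hocc, hres, h.le⟩
  rw [qpos_eq_firstSpace_add hf]
  nlinarith

theorem qpos_le_lastBead_add [NeZero p] (hf : IsPartition f) (r : ZMod p) :
    qpos p f r ≤ lastBead p f r + p := by
  rw [qpos_eq_lastBead_add_sub hf]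
  have : (0 : ℤ) ≤ p * (spacesBefore p f r (lastBead p f r + p)).ncard := by positivity
  omega

theorem qpos_le_max [NeZero p] (hf : IsPartition f) (r : ZMod p) :
    qpos p f r ≤ max (firstSpace p f r) (lastBead p f r) := by
  obtain ⟨⟨hres, hocc⟩, -⟩ := isLeast_firstSpace hf r
  by_cases h : firstSpace p f r < lastBead p f r + p
  · obtain ⟨N, hN⟩ := hf.2
    have hpos : 0 < (spacesBefore p f r (lastBead p f r + p)).ncard :=
      (Set.ncard_pos (spacesBefore_finite hN r _)).mpr ⟨firstSpace p f r, hocc, hres, h⟩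
    rw [qpos_eq_lastBead_add_sub hf]
    nlinarith [le_max_right (firstSpace p f r) (lastBead p f r)]
  · exact (qpos_le_lastBead_add hf r).trans ((not_lt.mp h).trans (le_max_left _ _))

end Abacus

open Abacus in
/-- If `λ` is `p`-quotient-separated and `q_i(λ) < q_j(λ)`, then the first vacant
position on runner `j` is later than the last occupied position on runner `i`. -/
theorem stmt9 (p : ℕ) (hp : 2 ≤ p) (f : ℕ → ℕ) (hf : IsPartition f)
    (hqs : QSep p f) (i j : ZMod p) (hij : qpos p f i < qpos p f j) :
    lastBead p f i < firstSpace p f j := by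
  have : NeZero p := ⟨by omega⟩
  have hij' : i ≠ j := ne_of_apply_ne (qpos p f) hij.ne
  have hne {x y : ℤ} {a b : ZMod p} (hx : (x : ZMod p) = a) (hy : (y : ZMod p) = b)
      (hab : a ≠ b) : x ≠ y := fun hxy => hab (hx ▸ hy ▸ congrArg _ hxy)
  have hfi := (isLeast_firstSpace hf i).1.1
  have hfj := (isLeast_firstSpace hf j).1.1
  have hli := (isGreatest_lastBead hf i).1.1
  have hlj := (isGreatest_lastBead hf j).1.1
  by_contra! hji
  have h1 : firstSpace p f j < lastBead p f i := hji.lt_of_ne (hne hfj hli hij'.symm)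
  have h2 : lastBead p f j < firstSpace p f i :=
    (not_lt.mp fun h => hqs ⟨i, j, hij', h, h1⟩).lt_of_ne (hne hlj hfi hij'.symm)
  refine hij.not_ge ?_
  rcases (hne hfj hfi hij'.symm).lt_or_gt with h | h
  · calc qpos p f j ≤ max (firstSpace p f j) (lastBead p f j) := qpos_le_max hf j
      _ ≤ firstSpace p f i := (max_lt h h2).le
      _ ≤ qpos p f i := firstSpace_le_qpos hf i
  · calc qpos p f j ≤ lastBead p f j + p := qpos_le_lastBead_add hf j
      _ ≤ firstSpace p f i + p := by omega
      _ ≤ qpos p f i := firstSpace_add_le_qpos hf i (h.trans h1)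
end
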